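/- Let G be a sun system and let r be a ray of G that is intersecting or split. Then the closed neighbourhood N[r] is a maximal clique of G. -/
import Mathlib


open SimpleGraph

variable {V : Type*}

/-- A maximal clique of `G`, as a set of vertices. -/
def MaxClique (G : SimpleGraph V) (s : Set V) : Prop :=
  G.IsClique s ∧ ∀ t : Set V, G.IsClique t → s ⊆ t → s = t

/-- The type of maximal cliques of `G`. -/
abbrev MC (G : SimpleGraph V) := {s : Set V // MaxClique G s}

/-- The closed neighbourhood `N[r]` of a vertex. -/
def closedNbhd (G : SimpleGraph V) (r : V) : Set V := insert r (G.neighborSet r)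

/-- A clique tree of `G`: a tree on the maximal cliques of `G` such that for each
vertex `v` the cliques containing `v` induce a connected subtree. -/
def IsCliqueTree (G : SimpleGraph V) (T : SimpleGraph (MC G)) : Prop :=
  T.IsTree ∧ ∀ v : V, (T.induce {Q : MC G | v ∈ Q.1}).Connected

/-- The induced subgraph of `T` on the set `S` is a path: it is connected and
every node has at most two neighbours inside `S`. -/
def PathOn {α : Type*} (T : SimpleGraph α) (S : Set α) : Prop :=
  (T.induce S).Connected ∧ ∀ a ∈ S, {b | b ∈ S ∧ T.Adj a b}.ncard ≤ 2

/-- A clique-path tree: a clique tree in which, for every vertex `v`, the cliques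
containing `v` form a path. -/
def IsCliquePathTree (G : SimpleGraph V) (T : SimpleGraph (MC G)) : Prop :=
  IsCliqueTree G T ∧ ∀ v : V, PathOn T {Q : MC G | v ∈ Q.1}

/-- A path graph: a graph admitting a clique-path tree. -/
def IsPathGraph (G : SimpleGraph V) : Prop :=
  ∃ T : SimpleGraph (MC G), IsCliquePathTree G T

/-- A chordal graph: no induced cycle of length at least 4. -/
def IsChordal (G : SimpleGraph V) : Prop :=
  ∀ n : ℕ, 4 ≤ n → IsEmpty (cycleGraph n ↪g G)

/-- An asteroidal set: an independent set such that, for every `v` in the set,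
the remaining vertices lie in a single connected component of `G - N[v]`. -/
def IsAsteroidal (G : SimpleGraph V) (S : Set V) : Prop :=
  (S.Pairwise fun u v => ¬ G.Adj u v) ∧
  ∀ v ∈ S, ∀ u w : {x : V | x ≠ v ∧ ¬ G.Adj v x},
    ↑u ∈ S → ↑w ∈ S → (G.induce {x : V | x ≠ v ∧ ¬ G.Adj v x}).Reachable u w

/-- The core of a flower: the common intersection of its cliques. -/
def flowerCore (F : Finset (Set V)) : Set V := ⋂₀ (↑F : Set (Set V))

/-- A sun system: the vertex set partitions into a flower `F` (a Helly collection of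
cliques with nonempty common core) and an asteroidal set `R` of rays. -/
structure SunSystem (G : SimpleGraph V) (F : Finset (Set V)) (R : Set V) : Prop where
  cover : ∀ x : V, (∃ P ∈ F, x ∈ P) ∨ x ∈ R
  disj : ∀ x ∈ R, ∀ P ∈ F, x ∉ P
  cliques : ∀ P ∈ F, G.IsClique P
  core_ne : (flowerCore F).Nonempty
  antichain : ∀ P ∈ F, ∀ P' ∈ F, P ⊆ P' → P = P'
  flower_ind : ∀ x y : V, (∃ P ∈ F, x ∈ P) → (∃ P' ∈ F, y ∈ P') → G.Adj x y →
    ∃ P ∈ F, x ∈ P ∧ y ∈ P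
  rays_ast : IsAsteroidal G R

/-- An intersecting ray: its neighbourhood is strictly contained in the core. -/
def Intersecting (G : SimpleGraph V) (F : Finset (Set V)) (r : V) : Prop :=
  G.neighborSet r ⊂ flowerCore F

/-- A ray split on the petal `P`. -/
def SplitOn (G : SimpleGraph V) (F : Finset (Set V)) (P : Set V) (r : V) : Prop :=
  P ∈ F ∧ G.neighborSet r ⊆ P ∧ (∀ P' ∈ F, G.neighborSet r ⊆ P' → P' = P) ∧
  (G.neighborSet r ∩ flowerCore F).Nonempty ∧
  (G.neighborSet r ∩ (P \ flowerCore F)).Nonempty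

/-- Vertices of the auxiliary graph: one per ray, one per split petal. -/
abbrev AuxV (G : SimpleGraph V) (F : Finset (Set V)) (R : Set V) :=
  ↥R ⊕ {P : Set V // ∃ r ∈ R, SplitOn G F P r}

/-- The auxiliary graph of a sun system. -/
def auxGraph (G : SimpleGraph V) (F : Finset (Set V)) (R : Set V) :
    SimpleGraph (AuxV G F R) :=
  SimpleGraph.fromRel (fun a b =>
    match a, b with
    | Sum.inl r, Sum.inl r' =>
        (G.neighborSet ↑r ∩ G.neighborSet ↑r' ∩ flowerCore F).Nonempty
    | Sum.inl r, Sum.inr P => SplitOn G F ↑P ↑r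
    | Sum.inr _, Sum.inl _ => False
    | Sum.inr _, Sum.inr _ => True)

/-- The minimal connected subtree of `T` containing the set `X`. -/
def treeSpan {α : Type*} (T : SimpleGraph α) (X : Set α) : Set α :=
  ⋂₀ {Y : Set α | X ⊆ Y ∧ (T.induce Y).Connected}

/-- `a` is a leaf of the subtree of `T` induced on `Y`. -/
def IsLeafIn {α : Type*} (T : SimpleGraph α) (Y : Set α) (a : α) : Prop :=
  a ∈ Y ∧ {b | b ∈ Y ∧ T.Adj a b}.ncard = 1

/-- For an intersecting or split ray `r` of a sun system, `N[r]` is a maximal clique. -/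
theorem stmt9 (G : SimpleGraph V) (F : Finset (Set V)) (R : Set V)
    (hS : SunSystem G F R) (r : V) (hr : r ∈ R)
    (hty : Intersecting G F r ∨ ∃ P, SplitOn G F P r) :
    MaxClique G (closedNbhd G r) := by
  constructor
  · intro x hx y hy hxy
    rcases hx with rfl | hx
    · rcases hy with rfl | hy
      · exact absurd rfl hxy
      · exact hy
    · rcases hy with rfl | hy
      · exact G.adj_symm hx
      · rcases hty with hint | ⟨P, hP⟩
        · rcases Finset.eq_empty_or_nonempty F with rfl | ⟨P, hPF⟩
          · exfalso
            have hxR : x ∈ R := by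
              rcases hS.cover x with ⟨P, hP, _⟩ | h
              · exact absurd hP (Finset.notMem_empty _)
              · exact h
            exact hS.rays_ast.1 hr hxR (G.ne_of_adj hx) hx
          · have hxC : x ∈ flowerCore F := hint.1 hx
            have hyC : y ∈ flowerCore F := hint.1 hy
            exact hS.cliques P hPF (hxC P (by simpa using hPF))
              (hyC P (by simpa using hPF)) hxy
        · exact hS.cliques P hP.1 (hP.2.1 hx) (hP.2.1 hy) hxy
  · intro t ht hsub
    refine Set.Subset.antisymm hsub fun x hxt => ?_
    by_cases hxr : x = r
    · exact hxr ▸ Set.mem_insert _ _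
    · exact Set.mem_insert_of_mem _ (G.adj_symm (ht hxt (hsub (Set.mem_insert _ _)) hxr))
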